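/- arXiv:2503.07030 — 2 statements merged into one kernel-verified Lean document; each statement's English description precedes it below -/
import Mathlib

section
/- If (u*, y*) with y* = h(u*) is a fixed point of the OFO update, i.e., the minimizer σ̂_α(u*, y*) of the projection QP equals 0, then there exists λ ≥ 0 such that 2Hᵀ(u*)∇Φᵀ(u*, y*) + Āᵀ λ = 0 and λᵢ b̄ᵢ = 0 for all i, where Ā, b̄ are evaluated at (u*, y*); in particular if all constraints are strictly inactive (b̄ > 0 componentwise), then Hᵀ(u*)∇Φᵀ(u*, y*) = 0, i.e., u* is a stationary point of u ↦ Φ(u, h(u)). -/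
open Matrix Finset


/-- Minimum of finitely many positive reals is bounded below by a positive real. -/
lemma exists_pos_le_of_pos {n : ℕ} (f : Fin n → ℝ) (hf : ∀ i, 0 < f i) :
    ∃ t : ℝ, 0 < t ∧ ∀ i, t ≤ f i := by
  cases isEmpty_or_nonempty (Fin n) with
  | inl h => exact ⟨1, one_pos, fun i => isEmptyElim i⟩
  | inr h =>
    obtain ⟨i0, -, hmin⟩ := Finset.exists_min_image Finset.univ f
      ⟨Classical.arbitrary _, Finset.mem_univ _⟩
    exact ⟨f i0, hf i0, fun i => hmin i (Finset.mem_univ i)⟩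

/-- Farkas lemma (cone version), proved by induction on the number of vectors. -/
lemma farkas_cone : ∀ (n : ℕ) {ν : ℕ} (c : Fin n → (Fin ν → ℝ)) (g : Fin ν → ℝ),
    (∀ w : Fin ν → ℝ, (∀ i, 0 ≤ c i ⬝ᵥ w) → 0 ≤ g ⬝ᵥ w) →
    ∃ lam : Fin n → ℝ, (∀ i, 0 ≤ lam i) ∧ g = ∑ i, lam i • c i := by
  intro n
  induction n with
  | zero =>
    intro ν c g hyp
    refine ⟨0, fun i => le_rfl, ?_⟩
    have h := hyp (-g) (fun i => i.elim0)
    have hg : g ⬝ᵥ g ≤ 0 := by simpa [dotProduct_neg] using h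
    have h0 : g ⬝ᵥ g = 0 := le_antisymm hg (Finset.sum_nonneg fun i _ => mul_self_nonneg _)
    have := (dotProduct_self_eq_zero).mp h0
    simp [this]
  | succ n IH =>
    intro ν c g hyp
    by_cases hcase : ∀ w : Fin ν → ℝ, (∀ i : Fin n, 0 ≤ c i.succ ⬝ᵥ w) → 0 ≤ g ⬝ᵥ w
    · obtain ⟨μ, hμ, hsum⟩ := IH (fun i => c i.succ) g hcase
      refine ⟨Fin.cons 0 μ, ?_, ?_⟩
      · intro i
        refine Fin.cases ?_ ?_ i
        · simp
        · intro j; simpa using hμ j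
      · rw [Fin.sum_univ_succ]
        simpa using hsum
    · push_neg at hcase
      obtain ⟨w₀, hw₀, hgw₀⟩ := hcase
      have hα : c 0 ⬝ᵥ w₀ < 0 := by
        by_contra hc
        push_neg at hc
        have : ∀ i : Fin (n+1), 0 ≤ c i ⬝ᵥ w₀ := by
          intro i
          refine Fin.cases ?_ ?_ i
          · exact hc
          · exact hw₀
        exact absurd (hyp w₀ this) (not_le.mpr hgw₀)
      set α := c 0 ⬝ᵥ w₀ with hαdef
      have hαne : α ≠ 0 := ne_of_lt hα
      set d : Fin n → (Fin ν → ℝ) := fun i => c i.succ - ((c i.succ ⬝ᵥ w₀) / α) • c 0 with hd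
      set g' : Fin ν → ℝ := g - ((g ⬝ᵥ w₀) / α) • c 0 with hg'
      have key : ∀ (x w : Fin ν → ℝ),
          (x - ((x ⬝ᵥ w₀) / α) • c 0) ⬝ᵥ w = x ⬝ᵥ (w - ((c 0 ⬝ᵥ w) / α) • w₀) := by
        intro x w
        simp [sub_dotProduct, dotProduct_sub, smul_dotProduct,
          dotProduct_smul, smul_eq_mul]
        ring
      have hyp' : ∀ w : Fin ν → ℝ, (∀ i, 0 ≤ d i ⬝ᵥ w) → 0 ≤ g' ⬝ᵥ w := by
        intro w hw
        set Rw := w - ((c 0 ⬝ᵥ w) / α) • w₀ with hRw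
        have hc0 : c 0 ⬝ᵥ Rw = 0 := by
          rw [hRw]
          simp [dotProduct_sub, dotProduct_smul, smul_eq_mul]
          field_simp
          rw [hαdef]; ring
        have hall : ∀ i : Fin (n+1), 0 ≤ c i ⬝ᵥ Rw := by
          intro i
          refine Fin.cases ?_ ?_ i
          · rw [hc0]
          · intro j
            have := hw j
            rwa [hd, key (c j.succ) w] at this
        have := hyp Rw hall
        rwa [hg', key g w]
      obtain ⟨μ, hμ, hsum⟩ := IH d g' hyp'
      set s : ℝ := ∑ i, μ i * ((c i.succ ⬝ᵥ w₀) / α) with hs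
      set β : ℝ := (g ⬝ᵥ w₀) / α - s with hβ
      have hβnn : 0 ≤ β := by
        have h1 : 0 ≤ (g ⬝ᵥ w₀) / α := le_of_lt (div_pos_of_neg_of_neg hgw₀ hα)
        have h2 : s ≤ 0 := Finset.sum_nonpos fun i _ =>
          mul_nonpos_of_nonneg_of_nonpos (hμ i) (div_nonpos_of_nonneg_of_nonpos (hw₀ i) (le_of_lt hα))
        rw [hβ]; linarith
      refine ⟨Fin.cons β μ, ?_, ?_⟩
      · intro i
        refine Fin.cases ?_ ?_ i
        · simpa using hβnn
        · intro j; simpa using hμ j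
      · rw [Fin.sum_univ_succ]
        simp only [Fin.cons_zero, Fin.cons_succ]
        funext j
        have hj := congrFun hsum j
        simp only [hg', hd, Pi.sub_apply, Pi.smul_apply, smul_eq_mul, Finset.sum_apply] at hj
        simp only [Pi.add_apply, Pi.smul_apply, smul_eq_mul, Finset.sum_apply]
        have expand : ∑ i, μ i * (c i.succ j - (c i.succ ⬝ᵥ w₀) / α * c 0 j)
            = (∑ i, μ i * c i.succ j) - s * c 0 j := by
          rw [hs, Finset.sum_mul, ← Finset.sum_sub_distrib]
          congr 1
          funext i
          ring
        rw [expand] at hj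
        rw [hβ]
        linarith


/-- if `w* = 0` minimizes the projection QP (a fixed point of OFO), then
KKT multipliers `λ ≥ 0` exist with `2Hᵀ∇Φᵀ + Āᵀλ = 0` and `λᵢ b̄ᵢ = 0`; in particular
if all constraints are strictly inactive (`b̄ > 0`) then `Hᵀ∇Φᵀ = 0`, i.e. the fixed
point is a stationary point of the reduced objective. -/
theorem ofo_fixed_point_stationarity {nu m nbar : ℕ}
    (G : Matrix (Fin nu) (Fin nu) ℝ) (hsymm : G.IsSymm) (hpd : G.PosDef)
    (H : Matrix (Fin m) (Fin nu) ℝ) (gradPhi : Fin m → ℝ)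
    (Abar : Matrix (Fin nbar) (Fin nu) ℝ) (bbar : Fin nbar → ℝ)
    (hfeas0 : ∀ i, (0 : ℝ) ≤ bbar i)
    (hmin : ∀ w : Fin nu → ℝ, (∀ i, Abar.mulVec w i ≤ bbar i) →
      (G⁻¹.mulVec (H.transpose.mulVec gradPhi)) ⬝ᵥ
          G.mulVec (G⁻¹.mulVec (H.transpose.mulVec gradPhi)) ≤
        (w + G⁻¹.mulVec (H.transpose.mulVec gradPhi)) ⬝ᵥ
          G.mulVec (w + G⁻¹.mulVec (H.transpose.mulVec gradPhi))) :
    (∃ lam : Fin nbar → ℝ, (∀ i, 0 ≤ lam i) ∧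
      (2 : ℝ) • (H.transpose.mulVec gradPhi) + Abar.transpose.mulVec lam = 0 ∧
      ∀ i, lam i * bbar i = 0) ∧
    ((∀ i, 0 < bbar i) → H.transpose.mulVec gradPhi = 0) := by
  set p : Fin nu → ℝ := H.transpose.mulVec gradPhi with hp
  set cvec : Fin nu → ℝ := G⁻¹.mulVec p with hcvec
  have hGc : G.mulVec cvec = p := by
    rw [hcvec, Matrix.mulVec_mulVec, Matrix.mul_nonsing_inv G (isUnit_iff_ne_zero.mpr (ne_of_gt hpd.det_pos)),
      Matrix.one_mulVec]
  -- basic inequality: for feasible w, 0 ≤ wᵀGw + 2 w·p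
  have hbasic : ∀ w : Fin nu → ℝ, (∀ i, Abar.mulVec w i ≤ bbar i) →
      0 ≤ w ⬝ᵥ G.mulVec w + 2 * (w ⬝ᵥ p) := by
    intro w hw
    have h := hmin w hw
    have hsymm' : ∀ v : Fin nu → ℝ, cvec ⬝ᵥ G.mulVec v = v ⬝ᵥ p := by
      intro v
      rw [Matrix.dotProduct_mulVec, ← Matrix.mulVec_transpose, hsymm.eq, hGc,
        dotProduct_comm]
    have hexp : (w + cvec) ⬝ᵥ G.mulVec (w + cvec)
        = w ⬝ᵥ G.mulVec w + 2 * (w ⬝ᵥ p) + cvec ⬝ᵥ G.mulVec cvec := by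
      rw [Matrix.mulVec_add, dotProduct_add, add_dotProduct,
        add_dotProduct, hsymm' w, hsymm' cvec]
      have : w ⬝ᵥ G.mulVec cvec = w ⬝ᵥ p := by rw [hGc]
      rw [this]; ring
    rw [hexp] at h
    linarith
  -- variational inequality over the active cone
  have hvar : ∀ w : Fin nu → ℝ, (∀ i, bbar i = 0 → Abar.mulVec w i ≤ 0) →
      0 ≤ w ⬝ᵥ p := by
    intro w hw
    set f : Fin nbar → ℝ := fun i => if 0 < Abar.mulVec w i then bbar i / Abar.mulVec w i else 1
      with hf
    have hfpos : ∀ i, 0 < f i := by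
      intro i
      rw [hf]
      by_cases hAi : 0 < Abar.mulVec w i
      · have hbpos : 0 < bbar i := by
          rcases lt_or_eq_of_le (hfeas0 i) with h | h
          · exact h
          · exact absurd (hw i h.symm) (not_le.mpr hAi)
        simp [hAi, div_pos hbpos hAi]
      · simp [hAi]
    obtain ⟨t0, ht0, ht0le⟩ := exists_pos_le_of_pos f hfpos
    have hfeast : ∀ t : ℝ, 0 < t → t ≤ t0 → ∀ i, Abar.mulVec (t • w) i ≤ bbar i := by
      intro t ht htle i
      have : Abar.mulVec (t • w) i = t * Abar.mulVec w i := by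
        rw [Matrix.mulVec_smul]; simp
      rw [this]
      by_cases hAi : 0 < Abar.mulVec w i
      · have hfi : f i = bbar i / Abar.mulVec w i := by rw [hf]; simp [hAi]
        have : t ≤ bbar i / Abar.mulVec w i := le_trans htle (hfi ▸ ht0le i)
        calc t * Abar.mulVec w i ≤ (bbar i / Abar.mulVec w i) * Abar.mulVec w i :=
              mul_le_mul_of_nonneg_right this (le_of_lt hAi)
          _ = bbar i := by field_simp
      · push_neg at hAi
        exact le_trans (mul_nonpos_of_nonneg_of_nonpos (le_of_lt ht) hAi) (hfeas0 i)
    have hq : ∀ t : ℝ, 0 < t → t ≤ t0 → 0 ≤ t * (w ⬝ᵥ G.mulVec w) + 2 * (w ⬝ᵥ p) := by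
      intro t ht htle
      have h := hbasic (t • w) (hfeast t ht htle)
      have h1 : (t • w) ⬝ᵥ G.mulVec (t • w) = t * t * (w ⬝ᵥ G.mulVec w) := by
        rw [Matrix.mulVec_smul, smul_dotProduct, dotProduct_smul]
        simp [smul_eq_mul]; ring
      have h2 : (t • w) ⬝ᵥ p = t * (w ⬝ᵥ p) := by
        rw [smul_dotProduct]; simp
      rw [h1, h2] at h
      nlinarith
    set q : ℝ := w ⬝ᵥ G.mulVec w with hqdef
    by_contra hneg
    push_neg at hneg
    by_cases hqpos : 0 < q
    · have hs : 0 < -(2 * (w ⬝ᵥ p)) / (2 * q) := div_pos (by linarith) (by linarith)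
      set t := min t0 (-(2 * (w ⬝ᵥ p)) / (2 * q)) with htdef
      have ht : 0 < t := lt_min ht0 hs
      have := hq t ht (min_le_left _ _)
      have htle2 : t ≤ -(2 * (w ⬝ᵥ p)) / (2 * q) := min_le_right _ _
      have : t * q ≤ -(2 * (w ⬝ᵥ p)) / 2 := by
        calc t * q ≤ (-(2 * (w ⬝ᵥ p)) / (2 * q)) * q := mul_le_mul_of_nonneg_right htle2 (le_of_lt hqpos)
          _ = -(2 * (w ⬝ᵥ p)) / 2 := by field_simp
      have hq' := hq t ht (min_le_left _ _)
      nlinarith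
    · push_neg at hqpos
      have := hq t0 ht0 le_rfl
      nlinarith
  -- apply Farkas
  set c : Fin nbar → (Fin nu → ℝ) := fun i => if bbar i = 0 then -(Abar i) else 0 with hc
  have hfark : ∀ w : Fin nu → ℝ, (∀ i, 0 ≤ c i ⬝ᵥ w) → 0 ≤ ((2:ℝ) • p) ⬝ᵥ w := by
    intro w hw
    have : ∀ i, bbar i = 0 → Abar.mulVec w i ≤ 0 := by
      intro i hb
      have := hw i
      rw [hc] at this
      simp only [hb, if_pos rfl] at this
      have : 0 ≤ -(Abar i) ⬝ᵥ w := by simpa using this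
      rw [neg_dotProduct] at this
      have : Abar i ⬝ᵥ w ≤ 0 := by linarith
      simpa [Matrix.mulVec] using this
    have h := hvar w this
    rw [smul_dotProduct]
    have : p ⬝ᵥ w = w ⬝ᵥ p := dotProduct_comm p w
    rw [this]
    rw [smul_eq_mul]; linarith
  obtain ⟨μ, hμ, hsum⟩ := farkas_cone nbar c ((2:ℝ) • p) hfark
  set lam : Fin nbar → ℝ := fun i => if bbar i = 0 then μ i else 0 with hlam
  have hlamnn : ∀ i, 0 ≤ lam i := by
    intro i; rw [hlam]
    by_cases h : bbar i = 0 <;> simp [h, hμ i]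
  have hcs : ∀ i, lam i * bbar i = 0 := by
    intro i; rw [hlam]
    by_cases h : bbar i = 0 <;> simp [h]
  have hstat : (2 : ℝ) • p + Abar.transpose.mulVec lam = 0 := by
    have hAl : Abar.transpose.mulVec lam = ∑ i, lam i • Abar i := by
      funext j
      rw [Matrix.mulVec]
      simp only [dotProduct, Matrix.transpose_apply, Finset.sum_apply, Pi.smul_apply,
        smul_eq_mul]
      exact Finset.sum_congr rfl fun i _ => mul_comm _ _
    have hterm : ∀ i, μ i • c i = -(lam i • Abar i) := by
      intro i
      rw [hc, hlam]
      by_cases h : bbar i = 0 <;> simp [h]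
    rw [hAl]
    have : ∑ i, lam i • Abar i = -((2:ℝ) • p) := by
      rw [hsum]
      rw [← Finset.sum_neg_distrib]
      exact Finset.sum_congr rfl fun i _ => by rw [hterm i, neg_neg]
    rw [this]; abel
  refine ⟨⟨lam, hlamnn, hstat, hcs⟩, ?_⟩
  intro hbpos
  have hlam0 : lam = 0 := by
    funext i
    rw [hlam]
    simp [ne_of_gt (hbpos i)]
  rw [hlam0, Matrix.mulVec_zero, add_zero] at hstat
  have : p = 0 := by
    have := hstat
    funext j
    have hj := congrFun this j
    simp at hj
    simpa using hj
  exact this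
end

section
/- Let M(λ*, w*) be the KKT Jacobian block matrix [[Ḡ, Āᵀ],[D(λ*)Ā, D(Āw* − b̄)]] arising from differentiating the QP optimality system, where Ḡ is symmetric positive definite, D(x) denotes the diagonal matrix with entries x. If strict complementarity holds (for every i, exactly one of λᵢ* > 0 and (Āw* − b̄)ᵢ < 0 holds) and the rows of Ā indexed by the active set {i : λᵢ* > 0} are linearly independent, then M(λ*, w*) is invertible. -/
open Matrix

/-- under strict complementarity and linear independence of the active
constraint rows, the KKT Jacobian block matrix
`[[Ḡ, Āᵀ],[D(λ*)Ā, D(Āw*−b̄)]]` is invertible. -/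
theorem kkt_jacobian_invertible {n m : ℕ}
    (G : Matrix (Fin n) (Fin n) ℝ) (hsymm : G.IsSymm) (hpd : G.PosDef)
    (A : Matrix (Fin m) (Fin n) ℝ) (b : Fin m → ℝ)
    (wstar : Fin n → ℝ) (lam : Fin m → ℝ)
    (hsc : ∀ i, (0 < lam i ∧ (A.mulVec wstar - b) i = 0) ∨
      (lam i = 0 ∧ (A.mulVec wstar - b) i < 0))
    (hli : LinearIndependent ℝ (fun i : {i : Fin m // 0 < lam i} => A i.1)) :
    IsUnit (Matrix.fromBlocks G A.transpose
      ((Matrix.diagonal lam) * A) (Matrix.diagonal (A.mulVec wstar - b))) := by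
  set s : Fin m → ℝ := A.mulVec wstar - b with hs
  rw [← Matrix.mulVec_injective_iff_isUnit]
  rw [Function.Injective]
  -- reduce to trivial kernel
  suffices h : ∀ v : Fin n ⊕ Fin m → ℝ,
      (Matrix.fromBlocks G A.transpose ((Matrix.diagonal lam) * A)
        (Matrix.diagonal s)) *ᵥ v = 0 → v = 0 by
    intro a b hab
    have : (Matrix.fromBlocks G A.transpose ((Matrix.diagonal lam) * A)
        (Matrix.diagonal s)) *ᵥ (a - b) = 0 := by
      rw [Matrix.mulVec_sub, hab, sub_self]
    have := h _ this
    exact sub_eq_zero.mp this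
  intro v hv
  set x : Fin n → ℝ := v ∘ Sum.inl with hx
  set y : Fin m → ℝ := v ∘ Sum.inr with hy
  rw [Matrix.fromBlocks_mulVec] at hv
  have h1 : G *ᵥ x + Aᵀ *ᵥ y = 0 := by
    have := congrFun hv
    ext j; simpa using this (Sum.inl j)
  have h2 : ∀ i, lam i * (A *ᵥ x) i + s i * y i = 0 := by
    intro i
    have := congrFun hv (Sum.inr i)
    simpa [← Matrix.mulVec_mulVec, Matrix.mulVec_diagonal, hx, hy] using this
  -- inactive constraints : y i = 0
  have hy0 : ∀ i, lam i = 0 → y i = 0 := by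
    intro i hl
    rcases hsc i with ⟨hpos, _⟩ | ⟨_, hneg⟩
    · exact absurd hl hpos.ne'
    · have := h2 i
      rw [hl, zero_mul, zero_add] at this
      exact (mul_eq_zero.mp this).resolve_left hneg.ne
  -- active constraints : (A x) i = 0
  have hAx0 : ∀ i, 0 < lam i → (A *ᵥ x) i = 0 := by
    intro i hl
    rcases hsc i with ⟨_, hz⟩ | ⟨hz, _⟩
    · have := h2 i
      rw [hz, zero_mul, add_zero] at this
      exact (mul_eq_zero.mp this).resolve_left hl.ne'
    · exact absurd hz hl.ne'
  -- x = 0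
  have hdot : x ⬝ᵥ (Aᵀ *ᵥ y) = 0 := by
    rw [Matrix.dotProduct_mulVec, ← Matrix.mulVec_transpose, Matrix.transpose_transpose]
    rw [dotProduct_comm]
    apply Finset.sum_eq_zero
    intro i _
    rcases hsc i with ⟨hpos, _⟩ | ⟨hz, _⟩
    · simp [hAx0 i hpos]
    · simp [hy0 i hz]
  have hGx : x ⬝ᵥ (G *ᵥ x) = 0 := by
    have := congrArg (fun w => x ⬝ᵥ w) h1
    simpa [dotProduct_add, hdot] using this
  have hx0 : x = 0 := by
    by_contra hne
    exact absurd hGx (ne_of_gt (by simpa using hpd.dotProduct_mulVec_pos hne))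
  -- A^T y = 0
  have hAty : Aᵀ *ᵥ y = 0 := by
    have := h1
    rw [hx0, Matrix.mulVec_zero, zero_add] at this
    exact this
  -- y = 0 via linear independence of active rows
  have hy' : ∀ i, y i = 0 := by
    have hsum : ∑ i : {i : Fin m // 0 < lam i}, (fun i : {i : Fin m // 0 < lam i} => y i.1) i • A i.1 = 0 := by
      have hfull : ∑ i : Fin m, y i • A i = 0 := by
        ext j
        have := congrFun hAty j
        simp only [Matrix.mulVec_transpose, Matrix.vecMul, dotProduct] at this
        simpa [Finset.sum_apply] using this
      rw [← hfull]
      rw [← Finset.sum_subset (Finset.subset_univ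
        (Finset.univ.filter (fun i => 0 < lam i)))]
      · exact (Finset.sum_subtype (Finset.univ.filter (fun i => 0 < lam i))
          (by simp) (fun i => y i • A i)).symm
      · intro i _ hi
        simp only [Finset.mem_filter, Finset.mem_univ, true_and] at hi
        rcases hsc i with ⟨hpos, _⟩ | ⟨hz, _⟩
        · exact absurd hpos hi
        · simp [hy0 i hz]
    have := Fintype.linearIndependent_iff.mp hli (fun i => y i.1) hsum
    intro i
    rcases hsc i with ⟨hpos, _⟩ | ⟨hz, _⟩
    · exact this ⟨i, hpos⟩
    · exact hy0 i hz
  -- conclude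
  ext j
  cases j with
  | inl j => exact congrFun hx0 j
  | inr j => exact hy' j
end
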